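/- Let H be a real N×p matrix with spectral norm ρ_H (largest singular value), let y ∈ ℝ^N, let s ∈ ℝ^p, and let 0 < μ ≤ 1/ρ_H². If ŝ minimizes ‖t - s - μ·Hᵀ(y - H s)‖₂² over all t in a set S containing s, then ‖y - H ŝ‖₂² ≤ ‖y - H s‖₂². -/

import Mathlib

open Matrix Finset Filter

/-- Squared Euclidean norm of a vector. -/
def sqNorm {n : Type*} [Fintype n] (v : n → ℝ) : ℝ := ∑ i, (v i)^2

/-- Spectral norm (largest singular value) of a real matrix,
as the operator 2-norm of the associated Euclidean linear map. -/
noncomputable def specNorm {m n : Type*} [Fintype m] [Fintype n] [DecidableEq n]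
    (H : Matrix m n ℝ) : ℝ :=
  ‖LinearMap.toContinuousLinearMap (Matrix.toEuclideanLin H)‖

/-- Number of nonzero entries (ℓ₀ "norm") of a vector. -/
noncomputable def l0 {n : Type*} [Fintype n] (v : n → ℝ) : ℕ :=
  (Set.toFinite (Function.support v)).toFinset.card

/-- `w` is a hard-thresholding of `v` at sparsity level `r`: `w` agrees with `v`
on a set `S` of `min r p` indices of largest magnitude and is zero elsewhere. -/
def IsHardThreshold {n : Type*} [Fintype n] (r : ℕ) (v w : n → ℝ) : Prop :=
  ∃ S : Finset n, S.card = min r (Fintype.card n) ∧ (∀ i ∈ S, w i = v i) ∧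
    (∀ i ∉ S, w i = 0) ∧ ∀ i ∈ S, ∀ j ∉ S, |v j| ≤ |v i|

/-! Comparing `ŝ` with the competitor `s` shows that the step `d = ŝ - s` satisfies
`‖d‖² ≤ 2⟨μ Hᵀ r, d⟩ = 2μ⟨r, H d⟩`, where `r = y - H s`.
Since `μ ‖H d‖² ≤ μ ρ_H² ‖d‖² ≤ ‖d‖²`, this gives `‖H d‖² ≤ 2⟨r, H d⟩`,
which is exactly `‖r - H d‖² ≤ ‖r‖²`, and `r - H d = y - H ŝ`. -/

section sqNorm

variable {n : Type*} [Fintype n]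

lemma sqNorm_nonneg (v : n → ℝ) : 0 ≤ sqNorm v :=
  Finset.sum_nonneg fun _ _ => sq_nonneg _

lemma sqNorm_neg (v : n → ℝ) : sqNorm (-v) = sqNorm v := by
  simp [sqNorm]

lemma sqNorm_sub (u v : n → ℝ) : sqNorm (u - v) = sqNorm u - 2 * (u ⬝ᵥ v) + sqNorm v := by
  simp only [sqNorm, dotProduct, Finset.mul_sum, ← Finset.sum_sub_distrib,
    ← Finset.sum_add_distrib]
  exact Finset.sum_congr rfl fun i _ => by rw [Pi.sub_apply]; ring

lemma sqNorm_sub_le_iff (u v : n → ℝ) :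
    sqNorm (u - v) ≤ sqNorm u ↔ sqNorm v ≤ 2 * (u ⬝ᵥ v) := by
  rw [sqNorm_sub]
  constructor <;> intro h <;> linarith

lemma sqNorm_eq_norm_toLp_sq (v : n → ℝ) : sqNorm v = ‖WithLp.toLp 2 v‖ ^ 2 := by
  simp [sqNorm, EuclideanSpace.norm_sq_eq]

end sqNorm

lemma sqNorm_mulVec_le {m n : Type*} [Fintype m] [Fintype n] [DecidableEq n]
    (H : Matrix m n ℝ) (v : n → ℝ) : sqNorm (H *ᵥ v) ≤ specNorm H ^ 2 * sqNorm v := by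
  rw [sqNorm_eq_norm_toLp_sq, sqNorm_eq_norm_toLp_sq, ← mul_pow]
  exact pow_le_pow_left₀ (norm_nonneg _)
    ((LinearMap.toContinuousLinearMap (toEuclideanLin H)).le_opNorm (WithLp.toLp 2 v)) 2

/-- For `specNorm H = 0` the bound `μ ≤ 1 / 0 = 0` forces `μ = 0`. -/
lemma mul_sqNorm_mulVec_le {m n : Type*} [Fintype m] [Fintype n] [DecidableEq n]
    (H : Matrix m n ℝ) (v : n → ℝ) {μ : ℝ} (hμ0 : 0 ≤ μ) (hμ : μ ≤ 1 / specNorm H ^ 2) :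
    μ * sqNorm (H *ᵥ v) ≤ sqNorm v := by
  rcases (sq_nonneg (specNorm H)).eq_or_lt with hρ | hρ
  · rw [← hρ, div_zero] at hμ
    rw [le_antisymm hμ hμ0, zero_mul]
    exact sqNorm_nonneg v
  · calc μ * sqNorm (H *ᵥ v) ≤ μ * (specNorm H ^ 2 * sqNorm v) :=
          mul_le_mul_of_nonneg_left (sqNorm_mulVec_le H v) hμ0
      _ = (μ * specNorm H ^ 2) * sqNorm v := by ring
      _ ≤ 1 * sqNorm v :=
          mul_le_mul_of_nonneg_right ((le_div_iff₀ hρ).mp hμ) (sqNorm_nonneg v)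
      _ = sqNorm v := one_mul _

theorem stmt_0_general {N p : ℕ} (H : Matrix (Fin N) (Fin p) ℝ) (y : Fin N → ℝ)
    (s sh : Fin p → ℝ) (μ : ℝ) (hμ0 : 0 < μ) (hμ : μ ≤ 1 / (specNorm H)^2)
    (S : Set (Fin p → ℝ)) (hsS : s ∈ S)
    (hmin : ∀ t ∈ S,
      sqNorm (sh - (s + μ • H.transpose.mulVec (y - H.mulVec s))) ≤
      sqNorm (t - (s + μ • H.transpose.mulVec (y - H.mulVec s)))) :
    sqNorm (y - H.mulVec sh) ≤ sqNorm (y - H.mulVec s) := by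
  set r := y - H *ᵥ s
  set d := sh - s
  set g := μ • Hᵀ *ᵥ r
  have hstep : sqNorm d ≤ 2 * (g ⬝ᵥ d) := by
    have h := hmin s hsS
    rwa [show sh - (s + g) = -(g - d) by simp only [d]; abel,
      show s - (s + g) = -g by abel, sqNorm_neg, sqNorm_neg, sqNorm_sub_le_iff] at h
  have hgrad : g ⬝ᵥ d = μ * (r ⬝ᵥ H *ᵥ d) := by
    rw [smul_dotProduct, dotProduct_mulVec, mulVec_transpose, smul_eq_mul]
  have hspec := mul_sqNorm_mulVec_le H d hμ0.le hμ
  rw [show y - H *ᵥ sh = r - H *ᵥ d by simp only [r, d, mulVec_sub]; abel, sqNorm_sub_le_iff]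
  refine le_of_mul_le_mul_left ?_ hμ0
  linarith

theorem stmt_0 {N p : ℕ} (H : Matrix (Fin N) (Fin p) ℝ) (y : Fin N → ℝ)
    (s sh : Fin p → ℝ) (μ : ℝ) (hμ0 : 0 < μ) (hμ : μ ≤ 1 / (specNorm H)^2)
    (S : Set (Fin p → ℝ)) (hsS : s ∈ S) (hshS : sh ∈ S)
    (hmin : ∀ t ∈ S,
      sqNorm (sh - (s + μ • H.transpose.mulVec (y - H.mulVec s))) ≤
      sqNorm (t - (s + μ • H.transpose.mulVec (y - H.mulVec s)))) :
    sqNorm (y - H.mulVec sh) ≤ sqNorm (y - H.mulVec s) :=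
  stmt_0_general H y s sh μ hμ0 hμ S hsS hmin
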